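/- arXiv:0904.3120 — 2 statements merged into one kernel-verified Lean document; each statement's English description precedes it below -/
import Mathlib

section
/- Let X be a Banach space, T a bounded linear operator on X, and Y a closed subspace of X. The following two conditions together: (i) T restricted to Y is an isomorphism onto its image (bounded below on Y), and (ii) d(Y, T(Y)) > 0, are equivalent to the existence of a constant c > 0 such that d(Ty, Y) ≥ c for all y in the unit sphere of Y. -/
/-- The distance `d(X,Y) = inf {‖x - y‖ : x ∈ S_X, y ∈ Y}` between subspaces. -/
noncomputable def subspaceDist {Z : Type*} [NormedAddCommGroup Z] [NormedSpace ℂ Z]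
    (X Y : Submodule ℂ Z) : ℝ :=
  sInf {r : ℝ | ∃ x ∈ X, ‖x‖ = 1 ∧ ∃ y ∈ Y, r = ‖x - y‖}

/-
Both conditions are homogeneous. By scaling, `d(Ty, Y) ≥ c` on the unit sphere of `Y` means
`d(Ty, Y) ≥ c ‖y‖` on `Y` (a lower bound for `y ↦ [Ty]` into `X ⧸ Y`), and `d(Y, TY) > 0` means
`‖x - Ty‖ ≥ d ‖x‖` for `x, y ∈ Y`. Each direction combines such a bound with the triangle
inequality `‖x - Ty‖ ≥ |‖x‖ - ‖Ty‖|`, which is the better one exactly when `‖x‖` and `‖Ty‖` are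
far apart.
-/

open Metric

section LowerBound

variable {𝕜 E F : Type*} [RCLike 𝕜] [NormedAddCommGroup E] [NormedSpace 𝕜 E]
  [SeminormedAddCommGroup F] [NormedSpace 𝕜 F]

theorem LinearMap.mul_norm_le_norm_of_forall_norm_eq_one {f : E →ₗ[𝕜] F} {p : Submodule 𝕜 E}
    {c : ℝ} (h : ∀ x ∈ p, ‖x‖ = 1 → c ≤ ‖f x‖) {x : E} (hx : x ∈ p) : c * ‖x‖ ≤ ‖f x‖ := by
  rcases eq_or_ne x 0 with rfl | hx0
  · simp
  have hpos : 0 < ‖x‖ := norm_pos_iff.mpr hx0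
  have hunit := h _ (p.smul_mem _ hx) (norm_smul_inv_norm hx0)
  rw [map_smul, norm_smul, norm_inv, RCLike.norm_ofReal, abs_norm] at hunit
  rwa [le_inv_mul_iff₀ hpos, mul_comm] at hunit

end LowerBound

theorem Submodule.norm_mkQ_eq_infDist {X : Type*} [SeminormedAddCommGroup X] {R : Type*} [Ring R]
    [Module R X] (Y : Submodule R X) (x : X) : ‖Y.mkQ x‖ = infDist x Y :=
  QuotientAddGroup.norm_mk (S := Y.toAddSubgroup) x

section SubspaceDist

variable {X : Type*} [NormedAddCommGroup X] [NormedSpace ℂ X]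

theorem subspaceDist_mul_norm_le {Y W : Submodule ℂ X} {x w : X} (hx : x ∈ Y) (hw : w ∈ W) :
    subspaceDist Y W * ‖x‖ ≤ ‖x - w‖ := by
  rcases eq_or_ne x 0 with rfl | hx0
  · simp
  have hpos : 0 < ‖x‖ := norm_pos_iff.mpr hx0
  set a : ℂ := (‖x‖ : ℂ)⁻¹
  have hmem : ‖x‖⁻¹ * ‖x - w‖ ∈ {r : ℝ | ∃ x ∈ Y, ‖x‖ = 1 ∧ ∃ y ∈ W, r = ‖x - y‖} := by
    refine ⟨a • x, Y.smul_mem a hx, norm_smul_inv_norm hx0, a • w, W.smul_mem a hw, ?_⟩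
    rw [← smul_sub, norm_smul, norm_inv, Complex.norm_real, norm_norm]
  have hle : subspaceDist Y W ≤ ‖x‖⁻¹ * ‖x - w‖ :=
    csInf_le ⟨0, by rintro r ⟨_, -, -, _, -, rfl⟩; positivity⟩ hmem
  rwa [le_inv_mul_iff₀ hpos, mul_comm] at hle

theorem le_subspaceDist {Y W : Submodule ℂ X} (hY : Y ≠ ⊥) {d : ℝ}
    (h : ∀ x ∈ Y, ‖x‖ = 1 → ∀ w ∈ W, d ≤ ‖x - w‖) : d ≤ subspaceDist Y W := by
  obtain ⟨x, hx, hx0⟩ := Submodule.exists_mem_ne_zero_of_ne_bot hY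
  refine le_csInf ⟨_, _, Y.smul_mem _ hx, norm_smul_inv_norm hx0, 0, W.zero_mem, rfl⟩ ?_
  rintro r ⟨x, hx, hx1, w, hw, rfl⟩
  exact h x hx hx1 w hw

theorem subspaceDist_nonneg (Y W : Submodule ℂ X) : 0 ≤ subspaceDist Y W :=
  Real.sInf_nonneg <| by rintro r ⟨_, -, -, _, -, rfl⟩; positivity

end SubspaceDist

section Operator

variable {X : Type*} [NormedAddCommGroup X] [NormedSpace ℂ X] (T : X →L[ℂ] X) {Y : Submodule ℂ X}

theorem mul_norm_le_infDist_of_mul_norm_le {c : ℝ}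
    (hT : ∀ y ∈ Y, c * ‖y‖ ≤ ‖T y‖) {y : X} (hy : y ∈ Y) :
    c * subspaceDist Y (Y.map (T : X →ₗ[ℂ] X)) / (1 + subspaceDist Y (Y.map (T : X →ₗ[ℂ] X))) *
      ‖y‖ ≤ infDist (T y) Y := by
  set d := subspaceDist Y (Y.map (T : X →ₗ[ℂ] X))
  have hd : 0 ≤ d := subspaceDist_nonneg _ _
  refine (le_infDist ⟨0, Y.zero_mem⟩).mpr fun z hz => ?_
  have hfar : d * ‖z‖ ≤ dist (T y) z := by
    rw [dist_comm, dist_eq_norm]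
    exact subspaceDist_mul_norm_le hz (Submodule.mem_map_of_mem hy)
  have hnear : c * ‖y‖ ≤ dist (T y) z + ‖z‖ := by
    rw [dist_eq_norm]
    linarith [hT y hy, norm_le_norm_add_norm_sub' (T y) z]
  rw [div_mul_eq_mul_div, div_le_iff₀ (by positivity)]
  nlinarith [mul_le_mul_of_nonneg_left hnear hd]

theorem mul_norm_le_infDist_of_forall_norm_eq_one {c : ℝ}
    (h : ∀ y ∈ Y, ‖y‖ = 1 → c ≤ infDist (T y) Y) {y : X} (hy : y ∈ Y) :
    c * ‖y‖ ≤ infDist (T y) Y := by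
  simp only [← Submodule.norm_mkQ_eq_infDist] at h ⊢
  exact (Y.mkQ ∘ₗ (T : X →ₗ[ℂ] X)).mul_norm_le_norm_of_forall_norm_eq_one h hy

theorem div_add_opNorm_le_subspaceDist (hY : Y ≠ ⊥) {c : ℝ} (hc : 0 < c)
    (h : ∀ y ∈ Y, c * ‖y‖ ≤ infDist (T y) Y) :
    c / (c + ‖T‖) ≤ subspaceDist Y (Y.map (T : X →ₗ[ℂ] X)) := by
  refine le_subspaceDist hY fun x hx hx1 w hw => ?_
  obtain ⟨y, hy, rfl⟩ := Submodule.mem_map.mp hw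
  rw [ContinuousLinearMap.coe_coe]
  have hfar : c * ‖y‖ ≤ ‖x - T y‖ := by
    rw [← dist_eq_norm, dist_comm]
    exact (h y hy).trans (infDist_le_dist_of_mem hx)
  have hnear : 1 ≤ ‖x - T y‖ + ‖T‖ * ‖y‖ := by
    rw [← hx1]
    exact (norm_le_norm_sub_add x (T y)).trans (by gcongr; exact T.le_opNorm y)
  rw [div_le_iff₀ (by positivity)]
  nlinarith [mul_le_mul_of_nonneg_left hnear hc.le, mul_le_mul_of_nonneg_left hfar (norm_nonneg T)]

end Operator

theorem boundedBelow_and_dist_pos_iff_general {X : Type*} [NormedAddCommGroup X] [NormedSpace ℂ X]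
    (T : X →L[ℂ] X) (Y : Submodule ℂ X)
    (hYinf : ¬ FiniteDimensional ℂ Y) :
    ((∃ c > 0, ∀ y ∈ Y, c * ‖y‖ ≤ ‖T y‖) ∧ 0 < subspaceDist Y (Y.map (T : X →ₗ[ℂ] X))) ↔
      ∃ c > 0, ∀ y ∈ Y, ‖y‖ = 1 → c ≤ Metric.infDist (T y) (Y : Set X) := by
  have hY : Y ≠ ⊥ := by
    rintro rfl
    exact hYinf inferInstance
  constructor
  · rintro ⟨⟨c, hc, hT⟩, hd⟩
    have hpos : 0 < 1 + subspaceDist Y (Y.map (T : X →ₗ[ℂ] X)) := by linarith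
    refine ⟨_, div_pos (mul_pos hc hd) hpos, fun y hy hy1 => ?_⟩
    simpa [hy1] using mul_norm_le_infDist_of_mul_norm_le T hT hy
  · rintro ⟨c, hc, h⟩
    have hquot : ∀ y ∈ Y, c * ‖y‖ ≤ infDist (T y) Y := fun y hy =>
      mul_norm_le_infDist_of_forall_norm_eq_one T h hy
    refine ⟨⟨c, hc, fun y hy => (hquot y hy).trans ?_⟩,
      (div_pos hc (by positivity)).trans_le (div_add_opNorm_le_subspaceDist T hY hc hquot)⟩
    simpa using infDist_le_dist_of_mem (x := T y) Y.zero_mem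

/-- `T` bounded below on `Y` together with `d(Y, T(Y)) > 0` is equivalent to the existence
of `c > 0` with `d(Ty, Y) ≥ c` for all `y` in the unit sphere of `Y`. -/
theorem boundedBelow_and_dist_pos_iff {X : Type*} [NormedAddCommGroup X] [NormedSpace ℂ X]
    [CompleteSpace X] (T : X →L[ℂ] X) (Y : Submodule ℂ X) (hY : IsClosed (Y : Set X))
    (hYinf : ¬ FiniteDimensional ℂ Y) :
    ((∃ c > 0, ∀ y ∈ Y, c * ‖y‖ ≤ ‖T y‖) ∧ 0 < subspaceDist Y (Y.map (T : X →ₗ[ℂ] X))) ↔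
      ∃ c > 0, ∀ y ∈ Y, ‖y‖ = 1 → c ≤ Metric.infDist (T y) (Y : Set X) :=
  boundedBelow_and_dist_pos_iff_general T Y hYinf
end

section
/- The identity element of a unital Banach algebra is not a commutator: there do not exist elements A, B with AB − BA = 1. -/
/-!
If `x * y - y * x = 1`, then by induction `x * y ^ (n + 1) - y ^ (n + 1) * x = (n + 1) • y ^ n`.
In particular no power of `y` vanishes, and taking norms gives
`(n + 1) * ‖y ^ n‖ ≤ 2 * ‖x‖ * ‖y‖ * ‖y ^ n‖`, i.e. `n + 1 ≤ 2 * ‖x‖ * ‖y‖` for every `n`,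
which is absurd.
-/

theorem mul_pow_succ_sub_pow_succ_mul_of_mul_sub_mul_eq_one {R : Type*} [Ring R] {x y : R}
    (h : x * y - y * x = 1) (n : ℕ) :
    x * y ^ (n + 1) - y ^ (n + 1) * x = (n + 1) • y ^ n := by
  induction n with
  | zero => simpa using h
  | succ n ih =>
    calc x * y ^ (n + 2) - y ^ (n + 2) * x
        = (x * y ^ (n + 1) - y ^ (n + 1) * x) * y + y ^ (n + 1) * (x * y - y * x) := by
          noncomm_ring
      _ = (n + 2) • y ^ (n + 1) := by
          rw [ih, h, smul_mul_assoc, ← pow_succ, mul_one, ← succ_nsmul]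

theorem norm_mul_sub_mul_le {A : Type*} [NonUnitalSeminormedRing A] (x a : A) :
    ‖x * a - a * x‖ ≤ 2 * ‖x‖ * ‖a‖ :=
  calc ‖x * a - a * x‖ ≤ ‖x * a‖ + ‖a * x‖ := norm_sub_le _ _
    _ ≤ ‖x‖ * ‖a‖ + ‖a‖ * ‖x‖ := add_le_add (norm_mul_le _ _) (norm_mul_le _ _)
    _ = 2 * ‖x‖ * ‖a‖ := by ring

section NormedRing

variable {A : Type*} [NormedRing A] [NormedSpace ℝ A] {x y : A}

theorem norm_mul_pow_succ_sub_pow_succ_mul_of_mul_sub_mul_eq_one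
    (h : x * y - y * x = 1) (n : ℕ) :
    ‖x * y ^ (n + 1) - y ^ (n + 1) * x‖ = (n + 1) * ‖y ^ n‖ := by
  rw [mul_pow_succ_sub_pow_succ_mul_of_mul_sub_mul_eq_one h, RCLike.norm_nsmul ℝ, nsmul_eq_mul,
    Nat.cast_succ]

theorem pow_ne_zero_of_mul_sub_mul_eq_one [Nontrivial A] (h : x * y - y * x = 1) (n : ℕ) :
    y ^ n ≠ 0 := by
  induction n with
  | zero => simp
  | succ n ih =>
    intro hzero
    have hnorm := norm_mul_pow_succ_sub_pow_succ_mul_of_mul_sub_mul_eq_one h n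
    rw [hzero, mul_zero, zero_mul, sub_zero, norm_zero] at hnorm
    exact ih (norm_eq_zero.mp ((mul_eq_zero.mp hnorm.symm).resolve_left (by positivity)))

theorem succ_le_of_mul_sub_mul_eq_one [Nontrivial A] (h : x * y - y * x = 1) (n : ℕ) :
    (n + 1 : ℝ) ≤ 2 * ‖x‖ * ‖y‖ := by
  have hpos : 0 < ‖y ^ n‖ := norm_pos_iff.mpr (pow_ne_zero_of_mul_sub_mul_eq_one h n)
  refine le_of_mul_le_mul_right ?_ hpos
  calc (n + 1 : ℝ) * ‖y ^ n‖
      = ‖x * y ^ (n + 1) - y ^ (n + 1) * x‖ :=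
        (norm_mul_pow_succ_sub_pow_succ_mul_of_mul_sub_mul_eq_one h n).symm
    _ ≤ 2 * ‖x‖ * ‖y ^ (n + 1)‖ := norm_mul_sub_mul_le _ _
    _ ≤ 2 * ‖x‖ * (‖y ^ n‖ * ‖y‖) := by
        gcongr
        rw [pow_succ]
        exact norm_mul_le _ _
    _ = 2 * ‖x‖ * ‖y‖ * ‖y ^ n‖ := by ring

theorem not_exists_mul_sub_mul_eq_one [Nontrivial A] : ¬ ∃ x y : A, x * y - y * x = 1 := by
  rintro ⟨x, y, h⟩
  obtain ⟨n, hn⟩ := exists_nat_gt (2 * ‖x‖ * ‖y‖)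
  linarith [succ_le_of_mul_sub_mul_eq_one h n]

end NormedRing

theorem one_not_commutator_general {A : Type*} [NormedRing A] [NormedAlgebra ℂ A]
    [NormOneClass A] :
    ¬ ∃ x y : A, x * y - y * x = 1 :=
  have : Nontrivial A := NormOneClass.nontrivial
  not_exists_mul_sub_mul_eq_one

/-- Wintner's theorem: the identity of a unital Banach algebra is not a commutator. -/
theorem one_not_commutator {A : Type*} [NormedRing A] [NormedAlgebra ℂ A]
    [CompleteSpace A] [NormOneClass A] :
    ¬ ∃ x y : A, x * y - y * x = 1 :=
  one_not_commutator_general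
end
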